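/- arXiv:2408.07206 — 7 statements merged into one kernel-verified Lean document; each statement's English description precedes it below -/
import Mathlib

section
/- Let u : ℝ → ℝ be continuous and let X, T, N : ℝ → ℝ³ be differentiable functions satisfying the Sabban frame equations X'(s) = T(s), T'(s) = -X(s) + u(s)·N(s), N'(s) = -u(s)·T(s) for all s. If X(0), T(0), N(0) form an orthonormal set (pairwise orthogonal unit vectors), then for every s the vectors X(s), T(s), N(s) form an orthonormal set. -/
open Real Set
open scoped RealInnerProductSpace

private lemma gron_zero_right {F : Type*} [NormedAddCommGroup F] [NormedSpace ℝ F]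
    (D D' : ℝ → F) (hD : ∀ x, HasDerivAt D (D' x) x)
    (c : ℝ → ℝ) (hc : Continuous c) (hb : ∀ x, ‖D' x‖ ≤ c x * ‖D x‖)
    (h0 : D 0 = 0) {s : ℝ} (hs : 0 ≤ s) : D s = 0 := by
  obtain ⟨K, hK⟩ := (isCompact_Icc (a := (0:ℝ)) (b := s)).exists_bound_of_continuousOn
    hc.continuousOn
  have h := norm_le_gronwallBound_of_norm_deriv_right_le (f := D) (f' := D')
    (δ := 0) (K := K) (ε := 0) (a := 0) (b := s)
    (fun x _ => (hD x).continuousAt.continuousWithinAt)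
    (fun x _ => (hD x).hasDerivWithinAt)
    (by simp [h0])
    (fun x hx => by
      have h1 : c x ≤ K := le_trans (le_abs_self _) (hK x (Ico_subset_Icc_self hx))
      have := (hb x).trans (mul_le_mul_of_nonneg_right h1 (norm_nonneg _))
      linarith)
    s ⟨hs, le_rfl⟩
  rw [gronwallBound_ε0_δ0] at h
  exact norm_le_zero_iff.mp h

private lemma gron_zero {F : Type*} [NormedAddCommGroup F] [NormedSpace ℝ F]
    (D D' : ℝ → F) (hD : ∀ x, HasDerivAt D (D' x) x)
    (c : ℝ → ℝ) (hc : Continuous c) (hb : ∀ x, ‖D' x‖ ≤ c x * ‖D x‖)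
    (h0 : D 0 = 0) (s : ℝ) : D s = 0 := by
  rcases le_or_gt 0 s with hs | hs
  · exact gron_zero_right D D' hD c hc hb h0 hs
  · have key : (fun t => D (-t)) (-s) = 0 := by
      apply gron_zero_right (fun t => D (-t)) (fun t => -D' (-t))
        (fun x => by
          have := ((hD (-x)).scomp x (hasDerivAt_neg x)); simp only [neg_one_smul, one_smul] at this; exact this)
        (fun t => c (-t)) (hc.comp continuous_neg)
        (fun x => by simpa using hb (-x)) (by simpa using h0) (by linarith)
    simpa using key

/-- If a Sabban frame `(X, T, N)` on the unit sphere, driven by a continuous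
geodesic-curvature control `u`, starts orthonormal at `s = 0`, it stays orthonormal. -/
theorem sabban_frame_stays_orthonormal
    (u : ℝ → ℝ) (hu : Continuous u)
    (X T N : ℝ → EuclideanSpace ℝ (Fin 3))
    (hX : ∀ s, HasDerivAt X (T s) s)
    (hT : ∀ s, HasDerivAt T (-X s + u s • N s) s)
    (hN : ∀ s, HasDerivAt N (-(u s) • T s) s)
    (hX0 : ‖X 0‖ = 1) (hT0 : ‖T 0‖ = 1) (hN0 : ‖N 0‖ = 1)
    (hXT0 : ⟪X 0, T 0⟫ = 0) (hXN0 : ⟪X 0, N 0⟫ = 0) (hTN0 : ⟪T 0, N 0⟫ = 0) :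
    ∀ s : ℝ, ‖X s‖ = 1 ∧ ‖T s‖ = 1 ∧ ‖N s‖ = 1 ∧
      ⟪X s, T s⟫ = 0 ∧ ⟪X s, N s⟫ = 0 ∧ ⟪T s, N s⟫ = 0 := by
  set D : ℝ → ℝ × ℝ × ℝ × ℝ × ℝ × ℝ := fun x =>
    (⟪X x, X x⟫ - 1, ⟪T x, T x⟫ - 1, ⟪N x, N x⟫ - 1, ⟪X x, T x⟫, ⟪X x, N x⟫, ⟪T x, N x⟫)
    with hDdef
  set D' : ℝ → ℝ × ℝ × ℝ × ℝ × ℝ × ℝ := fun x =>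
    (2 * ⟪X x, T x⟫,
     -(2 * ⟪X x, T x⟫) + 2 * (u x * ⟪T x, N x⟫),
     -(2 * (u x * ⟪T x, N x⟫)),
     (⟪T x, T x⟫ - 1) - (⟪X x, X x⟫ - 1) + u x * ⟪X x, N x⟫,
     ⟪T x, N x⟫ - u x * ⟪X x, T x⟫,
     u x * (⟪N x, N x⟫ - 1) - u x * (⟪T x, T x⟫ - 1) - ⟪X x, N x⟫) with hD'def
  have hD : ∀ x, HasDerivAt D (D' x) x := by
    intro x
    have h1 := (((hX x).inner ℝ (hX x)).sub_const 1)
    have h2 := (((hT x).inner ℝ (hT x)).sub_const 1)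
    have h3 := (((hN x).inner ℝ (hN x)).sub_const 1)
    have h4 := (hX x).inner ℝ (hT x)
    have h5 := (hX x).inner ℝ (hN x)
    have h6 := (hT x).inner ℝ (hN x)
    have := h1.prodMk (h2.prodMk (h3.prodMk (h4.prodMk (h5.prodMk h6))))
    convert this using 1
    simp only [hD'def, Prod.mk.injEq, inner_add_left, inner_add_right, inner_neg_left,
      inner_neg_right, real_inner_smul_left, real_inner_smul_right,
      real_inner_comm (T x) (X x), real_inner_comm (N x) (X x), real_inner_comm (N x) (T x)]
    refine ⟨by ring, by ring, by ring, by ring, by ring, by ring⟩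
  have hb : ∀ x, ‖D' x‖ ≤ (2 + 2 * |u x|) * ‖D x‖ := by
    intro x
    set M := ‖D x‖ with hM
    have hα : |⟪X x, X x⟫ - 1| ≤ M := norm_fst_le (D x)
    have hβ : |⟪T x, T x⟫ - 1| ≤ M :=
      le_trans (norm_fst_le (D x).2) (norm_snd_le (D x))
    have hγ : |⟪N x, N x⟫ - 1| ≤ M :=
      le_trans (le_trans (norm_fst_le (D x).2.2) (norm_snd_le (D x).2)) (norm_snd_le (D x))
    have hp : |⟪X x, T x⟫| ≤ M :=
      le_trans (le_trans (le_trans (norm_fst_le (D x).2.2.2) (norm_snd_le (D x).2.2))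
        (norm_snd_le (D x).2)) (norm_snd_le (D x))
    have hq : |⟪X x, N x⟫| ≤ M :=
      le_trans (le_trans (le_trans (le_trans (norm_fst_le (D x).2.2.2.2)
        (norm_snd_le (D x).2.2.2)) (norm_snd_le (D x).2.2)) (norm_snd_le (D x).2))
        (norm_snd_le (D x))
    have hr : |⟪T x, N x⟫| ≤ M :=
      le_trans (le_trans (le_trans (le_trans (norm_snd_le (D x).2.2.2.2)
        (norm_snd_le (D x).2.2.2)) (norm_snd_le (D x).2.2)) (norm_snd_le (D x).2))
        (norm_snd_le (D x))
    have hM0 : 0 ≤ M := norm_nonneg _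
    have hu0 : 0 ≤ |u x| := abs_nonneg _
    have hup : |u x * ⟪X x, T x⟫| ≤ |u x| * M := by
      rw [abs_mul]; exact mul_le_mul_of_nonneg_left hp hu0
    have huq : |u x * ⟪X x, N x⟫| ≤ |u x| * M := by
      rw [abs_mul]; exact mul_le_mul_of_nonneg_left hq hu0
    have hur : |u x * ⟪T x, N x⟫| ≤ |u x| * M := by
      rw [abs_mul]; exact mul_le_mul_of_nonneg_left hr hu0
    have huβ : |u x * (⟪T x, T x⟫ - 1)| ≤ |u x| * M := by
      rw [abs_mul]; exact mul_le_mul_of_nonneg_left hβ hu0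
    have huγ : |u x * (⟪N x, N x⟫ - 1)| ≤ |u x| * M := by
      rw [abs_mul]; exact mul_le_mul_of_nonneg_left hγ hu0
    have habs : ∀ y : ℝ, -|y| ≤ y ∧ y ≤ |y| := fun y => ⟨neg_abs_le y, le_abs_self y⟩
    simp only [hD'def, Prod.norm_def, Real.norm_eq_abs]
    refine max_le ?_ (max_le ?_ (max_le ?_ (max_le ?_ (max_le ?_ ?_)))) <;>
      (rw [abs_le]; constructor) <;>
      cases habs (⟪X x, T x⟫) with | intro a1 a2 =>
      cases habs (⟪T x, N x⟫) with | intro b1 b2 =>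
      cases habs (⟪X x, N x⟫) with | intro c1 c2 =>
      cases habs (⟪X x, X x⟫ - 1) with | intro d1 d2 =>
      cases habs (⟪T x, T x⟫ - 1) with | intro e1 e2 =>
      cases habs (u x * ⟪X x, T x⟫) with | intro f1 f2 =>
      cases habs (u x * ⟪X x, N x⟫) with | intro g1 g2 =>
      cases habs (u x * ⟪T x, N x⟫) with | intro i1 i2 =>
      cases habs (u x * (⟪T x, T x⟫ - 1)) with | intro j1 j2 =>
      cases habs (u x * (⟪N x, N x⟫ - 1)) with | intro k1 k2 =>
      linarith
  have h0 : D 0 = 0 := by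
    have e1 : ⟪X 0, X 0⟫ = 1 := by
      rw [real_inner_self_eq_norm_mul_norm, hX0]; ring
    have e2 : ⟪T 0, T 0⟫ = 1 := by
      rw [real_inner_self_eq_norm_mul_norm, hT0]; ring
    have e3 : ⟪N 0, N 0⟫ = 1 := by
      rw [real_inner_self_eq_norm_mul_norm, hN0]; ring
    rw [hDdef]
    show (⟪X 0, X 0⟫ - 1, ⟪T 0, T 0⟫ - 1, ⟪N 0, N 0⟫ - 1,
      ⟪X 0, T 0⟫, ⟪X 0, N 0⟫, ⟪T 0, N 0⟫) = (0 : ℝ × ℝ × ℝ × ℝ × ℝ × ℝ)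
    rw [e1, e2, e3, hXT0, hXN0, hTN0]
    norm_num
  have hc : Continuous fun x => 2 + 2 * |u x| :=
    continuous_const.add (continuous_const.mul hu.abs)
  have key : ∀ s, D s = 0 := gron_zero D D' hD _ hc hb h0
  intro s
  have hKs := key s
  simp only [hDdef, Prod.ext_iff, Prod.fst_zero, Prod.snd_zero] at hKs
  obtain ⟨k1, k2, k3, k4, k5, k6⟩ := hKs
  have n1 : ‖X s‖ = 1 := by
    have : ‖X s‖ * ‖X s‖ = 1 := by rw [← real_inner_self_eq_norm_mul_norm]; linarith
    rcases mul_self_eq_one_iff.mp this with h | h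
    · exact h
    · nlinarith [norm_nonneg (X s)]
  have n2 : ‖T s‖ = 1 := by
    have : ‖T s‖ * ‖T s‖ = 1 := by rw [← real_inner_self_eq_norm_mul_norm]; linarith
    rcases mul_self_eq_one_iff.mp this with h | h
    · exact h
    · nlinarith [norm_nonneg (T s)]
  have n3 : ‖N s‖ = 1 := by
    have : ‖N s‖ * ‖N s‖ = 1 := by rw [← real_inner_self_eq_norm_mul_norm]; linarith
    rcases mul_self_eq_one_iff.mp this with h | h
    · exact h
    · nlinarith [norm_nonneg (N s)]
  exact ⟨n1, n2, n3, k4, k5, k6⟩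
end

section
/- Let κ : I → ℝ and let h₁, h₂, H₁₂ : I → ℝ be differentiable on an open interval I with h₁'(s) = -κ(s)·h₂(s), h₂'(s) = H₁₂(s) + κ(s)·h₁(s), H₁₂'(s) = -h₂(s), and suppose the Hamiltonian condition holds with λ = 1, i.e., -1 + h₁(s) - κ(s)·H₁₂(s) = 0 for all s ∈ I. If H₁₂(s) = 0 for all s ∈ I, then κ(s) = 0 for all s ∈ I; i.e., on a subarc where H₁₂ vanishes identically with normal multiplier λ = 1, the optimal control is κ ≡ 0 (a great circular arc). -/
open Real Set

/-- With normal multiplier `λ = 1`, on a subarc where `H₁₂ ≡ 0` the optimal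
control of the Sabban-frame Dubins problem is `κ ≡ 0` (a great circular arc). -/
theorem normal_H12_zero_forces_zero_control
    (a b : ℝ) (κ h₁ h₂ H₁₂ : ℝ → ℝ)
    (hh₁ : ∀ s ∈ Ioo a b, HasDerivAt h₁ (-κ s * h₂ s) s)
    (hh₂ : ∀ s ∈ Ioo a b, HasDerivAt h₂ (H₁₂ s + κ s * h₁ s) s)
    (hH₁₂ : ∀ s ∈ Ioo a b, HasDerivAt H₁₂ (-h₂ s) s)
    (hHam : ∀ s ∈ Ioo a b, -1 + h₁ s - κ s * H₁₂ s = 0)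
    (hzero : ∀ s ∈ Ioo a b, H₁₂ s = 0) :
    ∀ s ∈ Ioo a b, κ s = 0 := by
  have hmem : ∀ s ∈ Ioo a b, Ioo a b ∈ nhds s := fun s hs =>
    isOpen_Ioo.mem_nhds hs
  -- h₂ vanishes on I
  have hh2zero : ∀ s ∈ Ioo a b, h₂ s = 0 := by
    intro s hs
    have hconst : HasDerivAt H₁₂ 0 s := by
      have : H₁₂ =ᶠ[nhds s] fun _ => (0 : ℝ) :=
        Filter.eventuallyEq_of_mem (hmem s hs) hzero
      exact (hasDerivAt_const s (0 : ℝ)).congr_of_eventuallyEq this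
    have := (hH₁₂ s hs).unique hconst
    linarith
  intro s hs
  have hconst : HasDerivAt h₂ 0 s := by
    have : h₂ =ᶠ[nhds s] fun _ => (0 : ℝ) :=
      Filter.eventuallyEq_of_mem (hmem s hs) hh2zero
    exact (hasDerivAt_const s (0 : ℝ)).congr_of_eventuallyEq this
  have h1 : H₁₂ s + κ s * h₁ s = 0 := (hh₂ s hs).unique hconst
  have h2 := hHam s hs
  have h3 := hzero s hs
  have h4 : h₁ s = 1 := by rw [h3] at h2; linarith
  rw [h3, h4] at h1
  linarith
end

section
/- Let l, L : ℝ → ℝ be differentiable and define the 3×3 matrix R(t) = R_z(l(t)) · R_y(-L(t) - π/2), where R_z(θ) = [[cos θ, -sin θ, 0], [sin θ, cos θ, 0], [0, 0, 1]] and R_y(θ) = [[cos θ, 0, sin θ], [0, 1, 0], [-sin θ, 0, cos θ]]. Then t ↦ R(t) is differentiable and R(t)ᵀ · R'(t) = [[0, sin(L(t))·l'(t), -L'(t)], [-sin(L(t))·l'(t), 0, -cos(L(t))·l'(t)], [L'(t), cos(L(t))·l'(t), 0]] for all t. -/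
open Real Matrix

/-- For the net rotation matrix `R(t) = R_z(l(t)) · R_y(-L(t) - π/2)` relating
the inertial and body frames of a vehicle at latitude `L` and longitude `l`, the map
`t ↦ R(t)` is differentiable (entrywise) and the body-frame angular velocity matrix
`R(t)ᵀ · R'(t)` is the stated skew-symmetric matrix. -/
theorem angular_velocity_matrix_formula
    (l L : ℝ → ℝ) (hl : Differentiable ℝ l) (hL : Differentiable ℝ L)
    (Rz Ry : ℝ → Matrix (Fin 3) (Fin 3) ℝ)
    (hRz : ∀ θ, Rz θ = !![Real.cos θ, -Real.sin θ, 0;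
                          Real.sin θ,  Real.cos θ, 0;
                          0, 0, 1])
    (hRy : ∀ θ, Ry θ = !![Real.cos θ, 0, Real.sin θ;
                          0, 1, 0;
                          -Real.sin θ, 0, Real.cos θ])
    (R : ℝ → Matrix (Fin 3) (Fin 3) ℝ)
    (hR : ∀ t, R t = Rz (l t) * Ry (-L t - π / 2)) :
    ∃ R' : ℝ → Matrix (Fin 3) (Fin 3) ℝ,
      (∀ t, ∀ i j, HasDerivAt (fun s => R s i j) (R' t i j) t) ∧
      ∀ t, (R t)ᵀ * R' t =
        !![0, Real.sin (L t) * deriv l t, -deriv L t;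
           -Real.sin (L t) * deriv l t, 0, -Real.cos (L t) * deriv l t;
           deriv L t, Real.cos (L t) * deriv l t, 0] := by
  have hcos : ∀ x : ℝ, Real.cos (-x - π/2) = -Real.sin x := by
    intro x
    rw [show -x - π/2 = -(x + π/2) by ring, Real.cos_neg, Real.cos_add_pi_div_two]
  have hsin : ∀ x : ℝ, Real.sin (-x - π/2) = -Real.cos x := by
    intro x
    rw [show -x - π/2 = -(x + π/2) by ring, Real.sin_neg, Real.sin_add_pi_div_two]
  have hRe : ∀ t, R t =
      !![-(Real.cos (l t) * Real.sin (L t)), -Real.sin (l t), -(Real.cos (l t) * Real.cos (L t));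
         -(Real.sin (l t) * Real.sin (L t)), Real.cos (l t), -(Real.sin (l t) * Real.cos (L t));
         Real.cos (L t), 0, -Real.sin (L t)] := by
    intro t
    rw [hR, hRz, hRy, hcos, hsin]
    ext i j
    fin_cases i <;> fin_cases j <;>
      simp [Matrix.mul_apply, Fin.sum_univ_three] <;> ring
  refine ⟨fun t =>
    !![Real.sin (l t) * deriv l t * Real.sin (L t) - Real.cos (l t) * Real.cos (L t) * deriv L t,
       -(Real.cos (l t) * deriv l t),
       Real.sin (l t) * deriv l t * Real.cos (L t) + Real.cos (l t) * Real.sin (L t) * deriv L t;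
       -(Real.cos (l t) * deriv l t * Real.sin (L t)) - Real.sin (l t) * Real.cos (L t) * deriv L t,
       -(Real.sin (l t) * deriv l t),
       -(Real.cos (l t) * deriv l t * Real.cos (L t)) + Real.sin (l t) * Real.sin (L t) * deriv L t;
       -(Real.sin (L t) * deriv L t), 0, -(Real.cos (L t) * deriv L t)], ?_, ?_⟩
  · intro t i j
    have dl := (hl t).hasDerivAt
    have dL := (hL t).hasDerivAt
    simp only [hRe]
    fin_cases i <;> fin_cases j <;> simp
    · exact ((dl.cos.mul dL.sin).neg).congr_deriv (by ring)
    · exact (dl.sin.neg).congr_deriv (by ring)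
    · exact ((dl.cos.mul dL.cos).neg).congr_deriv (by ring)
    · exact ((dl.sin.mul dL.sin).neg).congr_deriv (by ring)
    · convert dl.cos using 1 <;> ring
    · exact ((dl.sin.mul dL.cos).neg).congr_deriv (by ring)
    · convert dL.cos using 1 <;> ring
    · exact hasDerivAt_const t 0
    · exact (dL.sin.neg).congr_deriv (by ring)
  · intro t
    have hs := Real.sin_sq_add_cos_sq (l t)
    have hs2 := Real.sin_sq_add_cos_sq (L t)
    have hT : (R t)ᵀ =
        !![-(Real.cos (l t) * Real.sin (L t)), -(Real.sin (l t) * Real.sin (L t)), Real.cos (L t);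
           -Real.sin (l t), Real.cos (l t), 0;
           -(Real.cos (l t) * Real.cos (L t)), -(Real.sin (l t) * Real.cos (L t)), -Real.sin (L t)] := by
      rw [hRe]
      ext i j
      fin_cases i <;> fin_cases j <;> simp
    rw [hT, Matrix.mul_fin_three]
    ext i j
    fin_cases i <;> fin_cases j <;> simp
    · linear_combination (Real.sin (L t) * Real.cos (L t) * deriv L t) * hs
    · linear_combination (Real.sin (L t) * deriv l t) * hs
    · linear_combination (-(Real.sin (L t))^2 * deriv L t) * hs + (-deriv L t) * hs2
    · linear_combination (-Real.sin (L t) * deriv l t) * hs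
    · ring
    · linear_combination (-Real.cos (L t) * deriv l t) * hs
    · linear_combination ((Real.cos (L t))^2 * deriv L t) * hs + (deriv L t) * hs2
    · linear_combination (Real.cos (L t) * deriv l t) * hs
    · linear_combination (-Real.sin (L t) * Real.cos (L t) * deriv L t) * hs
end

section
/- Let F, m, v, ψ, L, L̇, l̇, ψ̇ be real numbers with m ≠ 0, and let Ω be the skew-symmetric matrix [[0, sin(L)·l̇, -L̇], [-sin(L)·l̇, 0, -cos(L)·l̇], [L̇, cos(L)·l̇, 0]]. If the Newton's-law vector equation (1/m)·(-F·sin ψ, F·cos ψ, 0) = v·ψ̇·(-sin ψ, cos ψ, 0) + Ω·(v·cos ψ, v·sin ψ, 0) holds in ℝ³, then F/m = v·ψ̇ - v·sin(L)·l̇. -/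
open Real Matrix

/-- Newton's-law vector equation in the body frame of the spherical-coordinate
vehicle model implies the scalar lateral-force relation `F/m = v·ψ̇ - v·sin L·l̇`. -/
theorem newton_law_lateral_component
    (F m v ψ L Ldot ldot ψdot : ℝ) (hm : m ≠ 0)
    (Ω : Matrix (Fin 3) (Fin 3) ℝ)
    (hΩ : Ω = !![0, Real.sin L * ldot, -Ldot;
                 -(Real.sin L * ldot), 0, -(Real.cos L * ldot);
                 Ldot, Real.cos L * ldot, 0])
    (heq : (1 / m) • ![-(F * Real.sin ψ), F * Real.cos ψ, 0] =
        (v * ψdot) • ![-Real.sin ψ, Real.cos ψ, 0]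
          + Ω.mulVec ![v * Real.cos ψ, v * Real.sin ψ, 0]) :
    F / m = v * ψdot - v * Real.sin L * ldot := by
  subst hΩ
  have h0 := congrFun heq 0
  have h1 := congrFun heq 1
  simp [Matrix.mulVec, dotProduct, Fin.sum_univ_succ] at h0 h1
  have hs := Real.sin_sq_add_cos_sq ψ
  field_simp at h0 h1 ⊢
  linear_combination (-Real.sin ψ) * h0 + Real.cos ψ * h1 - (F - (v * ψdot - v * Real.sin L * ldot) * m) * hs
end

section
/- Let η > 0, e = 0, and let L, l, ψ, λ_L, λ_l, λ_ψ : I → ℝ be differentiable on an open interval I with cos L(t) ≠ 0 for all t, satisfying the adjoint equation λ_ψ'(t) = λ_L(t)·sin ψ(t) - λ_l(t)·cos ψ(t)/cos L(t) - λ_ψ(t)·tan L(t)·cos ψ(t) and the vanishing-Hamiltonian condition e + λ_L(t)·cos ψ(t) + λ_l(t)·sin ψ(t)/cos L(t) + λ_ψ(t)·tan L(t)·sin ψ(t) + λ_ψ(t)·u(t)/η = 0 for all t ∈ I. If λ_ψ(t) = 0 for all t ∈ I, then λ_L(t) = 0 and λ_l(t) = 0 for all t ∈ I; i.e., the abnormal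 multiplier e = 0 together with λ_ψ ≡ 0 forces all adjoint variables to vanish, violating non-triviality. -/
open Real Set

/-- In the spherical-coordinate Dubins model with abnormal multiplier
`e = 0`, if `λ_ψ ≡ 0` on an open interval then `λ_L ≡ 0` and `λ_l ≡ 0` there, violating
the non-triviality condition of PMP. -/
theorem spherical_abnormal_nontriviality_violation
    (a b η e : ℝ) (hη : 0 < η) (he : e = 0)
    (u L l ψ lamL laml lamψ : ℝ → ℝ)
    (hLdiff : DifferentiableOn ℝ L (Ioo a b))
    (hldiff : DifferentiableOn ℝ l (Ioo a b))
    (hψdiff : DifferentiableOn ℝ ψ (Ioo a b))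
    (hlamLdiff : DifferentiableOn ℝ lamL (Ioo a b))
    (hlamldiff : DifferentiableOn ℝ laml (Ioo a b))
    (hcL : ∀ t ∈ Ioo a b, Real.cos (L t) ≠ 0)
    (hlamψ' : ∀ t ∈ Ioo a b, HasDerivAt lamψ
      (lamL t * Real.sin (ψ t) - laml t * Real.cos (ψ t) / Real.cos (L t)
        - lamψ t * Real.tan (L t) * Real.cos (ψ t)) t)
    (hHam : ∀ t ∈ Ioo a b,
      e + lamL t * Real.cos (ψ t) + laml t * Real.sin (ψ t) / Real.cos (L t)
        + lamψ t * Real.tan (L t) * Real.sin (ψ t) + lamψ t * u t / η = 0)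
    (hlamψ0 : ∀ t ∈ Ioo a b, lamψ t = 0) :
    ∀ t ∈ Ioo a b, lamL t = 0 ∧ laml t = 0 := by
  intro t ht
  have hopen : Ioo a b ∈ nhds t := (isOpen_Ioo).mem_nhds ht
  -- derivative of lamψ at t is 0 since lamψ ≡ 0 near t
  have hzero : HasDerivAt lamψ 0 t := by
    have : HasDerivAt (fun _ : ℝ => (0:ℝ)) 0 t := hasDerivAt_const t 0
    exact this.congr_of_eventuallyEq (Filter.eventuallyEq_of_mem hopen hlamψ0)
  have hD := (hlamψ' t ht).unique hzero
  have h0 := hlamψ0 t ht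
  rw [h0] at hD
  have hH := hHam t ht
  rw [he, h0] at hH
  simp only [zero_mul, mul_zero, add_zero, zero_add, sub_zero, zero_div] at hD hH
  -- hD : lamL t * sin ψ - laml t * cos ψ / cos L = 0
  -- hH : lamL t * cos ψ + laml t * sin ψ / cos L = 0
  have hcLt := hcL t ht
  set A := lamL t
  set B := laml t / Real.cos (L t) with hB
  have e1 : A * Real.sin (ψ t) - B * Real.cos (ψ t) = 0 := by
    rw [hB]; linarith [hD, (by ring : laml t * Real.cos (ψ t) / Real.cos (L t) = laml t / Real.cos (L t) * Real.cos (ψ t))]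
  have e2 : A * Real.cos (ψ t) + B * Real.sin (ψ t) = 0 := by
    rw [hB]; linarith [hH, (by ring : laml t * Real.sin (ψ t) / Real.cos (L t) = laml t / Real.cos (L t) * Real.sin (ψ t))]
  have hpyth := Real.sin_sq_add_cos_sq (ψ t)
  have hA : A = 0 := by nlinarith [sq_nonneg A, sq_nonneg B]
  have hBz : B = 0 := by nlinarith [sq_nonneg A, sq_nonneg B]
  refine ⟨hA, ?_⟩
  have := (div_eq_zero_iff.mp hBz).resolve_right hcLt
  exact this
end

section
/- Let η > 0, e = -1, let u : I → ℝ be continuous on an open interval I, and let L, l, ψ, λ_L, λ_l, λ_ψ : I → ℝ be differentiable with cos L(t) ≠ 0 for all t ∈ I, satisfying the state equations L' = cos ψ, l' = sin ψ/cos L, ψ' = tan L·sin ψ + u/η, the adjoint equations λ_L' = -λ_l·sin ψ·sin L/cos²L - λ_ψ·sin ψ/cos²L, λ_l' = 0, λ_ψ' = λ_L·sin ψ - λ_l·cos ψ/cos L - λ_ψ·tan L·cos ψ, and the vanishing-Hamiltonian condition e + λ_L·cos ψ + λ_l·sin ψ/cos L + λ_ψ·tan L·sin ψ + λ_ψ·u/η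 = 0 on I. If λ_ψ(t) = 0 for all t ∈ I, then u(t) = 0 for all t ∈ I. -/
open Real Set

/-- In the spherical-coordinate Dubins model with normal multiplier `e = -1`,
on a singular arc where `λ_ψ ≡ 0` the optimal control is `u ≡ 0`. -/
theorem spherical_singular_arc_zero_control
    (a b η e : ℝ) (hη : 0 < η) (he : e = -1)
    (u : ℝ → ℝ) (hu : ContinuousOn u (Ioo a b))
    (L l ψ lamL laml lamψ : ℝ → ℝ)
    (hL' : ∀ t ∈ Ioo a b, HasDerivAt L (Real.cos (ψ t)) t)
    (hl' : ∀ t ∈ Ioo a b, HasDerivAt l (Real.sin (ψ t) / Real.cos (L t)) t)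
    (hψ' : ∀ t ∈ Ioo a b, HasDerivAt ψ (Real.tan (L t) * Real.sin (ψ t) + u t / η) t)
    (hcL : ∀ t ∈ Ioo a b, Real.cos (L t) ≠ 0)
    (hlamL' : ∀ t ∈ Ioo a b, HasDerivAt lamL
      (-laml t * Real.sin (ψ t) * Real.sin (L t) / Real.cos (L t) ^ 2
        - lamψ t * Real.sin (ψ t) / Real.cos (L t) ^ 2) t)
    (hlaml' : ∀ t ∈ Ioo a b, HasDerivAt laml 0 t)
    (hlamψ' : ∀ t ∈ Ioo a b, HasDerivAt lamψ
      (lamL t * Real.sin (ψ t) - laml t * Real.cos (ψ t) / Real.cos (L t)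
        - lamψ t * Real.tan (L t) * Real.cos (ψ t)) t)
    (hHam : ∀ t ∈ Ioo a b,
      e + lamL t * Real.cos (ψ t) + laml t * Real.sin (ψ t) / Real.cos (L t)
        + lamψ t * Real.tan (L t) * Real.sin (ψ t) + lamψ t * u t / η = 0)
    (hlamψ0 : ∀ t ∈ Ioo a b, lamψ t = 0) :
    ∀ t ∈ Ioo a b, u t = 0 := by
  -- First: on all of Ioo a b, the derivative of lamψ must be 0 since lamψ ≡ 0 there,
  -- giving the relation S(t) = lamL t sinψ - laml t cosψ/cosL = 0.
  have hS : ∀ t ∈ Ioo a b,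
      lamL t * Real.sin (ψ t) - laml t * (Real.cos (ψ t) / Real.cos (L t)) = 0 := by
    intro t ht
    have hnhds : Ioo a b ∈ nhds t := isOpen_Ioo.mem_nhds ht
    have hE : lamψ =ᶠ[nhds t] fun _ => (0 : ℝ) :=
      Filter.eventually_of_mem hnhds (fun s hs => hlamψ0 s hs)
    have h0 : HasDerivAt lamψ 0 t :=
      (hasDerivAt_const t (0 : ℝ)).congr_of_eventuallyEq hE
    have := (hlamψ' t ht).unique h0
    have hz := hlamψ0 t ht
    rw [hz] at this
    linear_combination this
  intro t ht
  have hnhds : Ioo a b ∈ nhds t := isOpen_Ioo.mem_nhds ht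
  have hc : Real.cos (L t) ≠ 0 := hcL t ht
  -- Derivative of ψ
  have hψd := hψ' t ht
  -- derivative of sin ∘ ψ
  have hsinψ : HasDerivAt (fun s => Real.sin (ψ s))
      (Real.cos (ψ t) * (Real.tan (L t) * Real.sin (ψ t) + u t / η)) t :=
    (Real.hasDerivAt_sin (ψ t)).comp t hψd
  have hcosψ : HasDerivAt (fun s => Real.cos (ψ s))
      (-Real.sin (ψ t) * (Real.tan (L t) * Real.sin (ψ t) + u t / η)) t :=
    (Real.hasDerivAt_cos (ψ t)).comp t hψd
  have hcosL : HasDerivAt (fun s => Real.cos (L s))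
      (-Real.sin (L t) * Real.cos (ψ t)) t :=
    (Real.hasDerivAt_cos (L t)).comp t (hL' t ht)
  -- derivative of F = lamL * sin∘ψ - laml * (cos∘ψ / cos∘L)
  have hquot : HasDerivAt (fun s => Real.cos (ψ s) / Real.cos (L s))
      ((-Real.sin (ψ t) * (Real.tan (L t) * Real.sin (ψ t) + u t / η) * Real.cos (L t)
        - Real.cos (ψ t) * (-Real.sin (L t) * Real.cos (ψ t))) / Real.cos (L t) ^ 2) t :=
    hcosψ.div hcosL hc
  have hF : HasDerivAt
      (fun s => lamL s * Real.sin (ψ s) - laml s * (Real.cos (ψ s) / Real.cos (L s)))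
      (((-laml t * Real.sin (ψ t) * Real.sin (L t) / Real.cos (L t) ^ 2
          - lamψ t * Real.sin (ψ t) / Real.cos (L t) ^ 2) * Real.sin (ψ t)
        + lamL t * (Real.cos (ψ t) * (Real.tan (L t) * Real.sin (ψ t) + u t / η)))
       - (0 * (Real.cos (ψ t) / Real.cos (L t))
        + laml t * ((-Real.sin (ψ t) * (Real.tan (L t) * Real.sin (ψ t) + u t / η) * Real.cos (L t)
          - Real.cos (ψ t) * (-Real.sin (L t) * Real.cos (ψ t))) / Real.cos (L t) ^ 2))) t :=
    ((hlamL' t ht).mul hsinψ).sub ((hlaml' t ht).mul hquot)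
  -- F ≡ 0 on Ioo a b, so its derivative at t is 0
  have hF0 : HasDerivAt
      (fun s => lamL s * Real.sin (ψ s) - laml s * (Real.cos (ψ s) / Real.cos (L s)))
      0 t := by
    refine (hasDerivAt_const t (0 : ℝ)).congr_of_eventuallyEq ?_
    exact Filter.eventually_of_mem hnhds (fun s hs => hS s hs)
  have hkey := hF.unique hF0
  -- Now the algebra. Set abbreviations.
  have hz := hlamψ0 t ht
  have hHt := hHam t ht
  have hSt := hS t ht
  rw [hz, he] at hHt
  set A := lamL t with hA
  set B := laml t with hB
  set sp := Real.sin (ψ t) with hsp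
  set cp := Real.cos (ψ t) with hcp
  set s := Real.sin (L t) with hs
  set c := Real.cos (L t) with hcdef
  have hpyth : sp ^ 2 + cp ^ 2 = 1 := Real.sin_sq_add_cos_sq (ψ t)
  have htan : Real.tan (L t) = s / c := Real.tan_eq_sin_div_cos (L t)
  rw [hz] at hkey
  rw [htan] at hkey hHt
  -- From Hamiltonian : A * cp + B * sp / c = 1
  have hHam' : A * cp + B * sp / c = 1 := by linear_combination hHt
  -- From hSt and hHam' : B = sp * c and A = cp
  have hBval : B = sp * c := by
    have h1 : (A * cp + B * sp / c) * sp = sp := by rw [hHam']; ring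
    have h2 : (A * sp - B * (cp / c)) * cp = 0 := by rw [hSt]; ring
    field_simp at h1 h2
    linear_combination h1 - h2 - B * hpyth
  have hAval : A = cp := by
    have h1 : (A * cp + B * sp / c) * cp = cp := by rw [hHam']; ring
    have h2 : (A * sp - B * (cp / c)) * sp = 0 := by rw [hSt]; ring
    field_simp at h1 h2
    have hAc : A * c = cp * c := by linear_combination h1 + h2 - A * c * hpyth
    exact mul_right_cancel₀ hc hAc
  -- Substitute into hkey
  rw [hAval, hBval] at hkey
  have hη' : η ≠ 0 := ne_of_gt hη
  field_simp at hkey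
  have h : u t * (c ^ 6 * η) = 0 := by
    linear_combination c ^ 4 * η * hkey - u t * c ^ 6 * η * hpyth
  have hne : c ^ 6 * η ≠ 0 := mul_ne_zero (pow_ne_zero 6 hc) hη'
  exact (mul_eq_zero.mp h).resolve_right hne
end

section
/- Let η > 0, e ∈ ℝ, let u : I → ℝ, and let L, l, ψ, λ_L, λ_l, λ_ψ : I → ℝ be differentiable on an open interval I with cos L(t) ≠ 0 for all t, satisfying the state equations L' = cos ψ, l' = sin ψ/cos L, ψ' = tan L·sin ψ + u/η, the adjoint equations λ_L' = -λ_l·sin ψ·sin L/cos²L - λ_ψ·sin ψ/cos²L, λ_l' = 0, λ_ψ' = λ_L·sin ψ - λ_l·cos ψ/cos L - λ_ψ·tan L·cos ψ, and the vanishing-Hamiltonian condition e + λ_L·cos ψ + λ_l·sin ψ/cos L + λ_ψ·tan L·sin ψ + λ_ψ·u/η = 0 on I. Then λ_ψ' is differentiable on I and λ_ψ''(t) = -λ_ψ(t)·(1 + u(t)²/η²) - e·u(t)/η for all t ∈ I. In particular, λ_ψ satisfies the same second-order ODE as the adjoint function H₁₂ of the Sabban-frame model (H₁₂'' + (1+κ²)H₁₂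 = -λκ with λ = -e) when U_max = 1/η. -/
open Real Set

/-- In the spherical-coordinate Dubins model, the adjoint `λ_ψ` is twice
differentiable and satisfies `λ_ψ'' = -λ_ψ·(1 + u²/η²) - e·u/η`, the same second-order ODE
as the adjoint `H₁₂` of the Sabban-frame model (with `κ = u/η`, `λ = -e`, `U_max = 1/η`). -/
theorem spherical_adjoint_second_order_ODE
    (a b η e : ℝ) (hη : 0 < η)
    (u L l ψ lamL laml lamψ : ℝ → ℝ)
    (hL' : ∀ t ∈ Ioo a b, HasDerivAt L (Real.cos (ψ t)) t)
    (hl' : ∀ t ∈ Ioo a b, HasDerivAt l (Real.sin (ψ t) / Real.cos (L t)) t)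
    (hψ' : ∀ t ∈ Ioo a b, HasDerivAt ψ (Real.tan (L t) * Real.sin (ψ t) + u t / η) t)
    (hcL : ∀ t ∈ Ioo a b, Real.cos (L t) ≠ 0)
    (hlamL' : ∀ t ∈ Ioo a b, HasDerivAt lamL
      (-laml t * Real.sin (ψ t) * Real.sin (L t) / Real.cos (L t) ^ 2
        - lamψ t * Real.sin (ψ t) / Real.cos (L t) ^ 2) t)
    (hlaml' : ∀ t ∈ Ioo a b, HasDerivAt laml 0 t)
    (hlamψ' : ∀ t ∈ Ioo a b, HasDerivAt lamψ
      (lamL t * Real.sin (ψ t) - laml t * Real.cos (ψ t) / Real.cos (L t)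
        - lamψ t * Real.tan (L t) * Real.cos (ψ t)) t)
    (hHam : ∀ t ∈ Ioo a b,
      e + lamL t * Real.cos (ψ t) + laml t * Real.sin (ψ t) / Real.cos (L t)
        + lamψ t * Real.tan (L t) * Real.sin (ψ t) + lamψ t * u t / η = 0) :
    ∀ t ∈ Ioo a b, HasDerivAt
      (fun s => lamL s * Real.sin (ψ s) - laml s * Real.cos (ψ s) / Real.cos (L s)
        - lamψ s * Real.tan (L s) * Real.cos (ψ s))
      (-lamψ t * (1 + (u t) ^ 2 / η ^ 2) - e * u t / η) t := by
  intro t ht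
  have hcLt := hcL t ht
  have hψt := hψ' t ht
  have hLt := hL' t ht
  have hsin : HasDerivAt (fun s => Real.sin (ψ s))
      (Real.cos (ψ t) * (Real.tan (L t) * Real.sin (ψ t) + u t / η)) t :=
    (Real.hasDerivAt_sin (ψ t)).comp t hψt
  have hcos : HasDerivAt (fun s => Real.cos (ψ s))
      (-Real.sin (ψ t) * (Real.tan (L t) * Real.sin (ψ t) + u t / η)) t :=
    (Real.hasDerivAt_cos (ψ t)).comp t hψt
  have hcosL : HasDerivAt (fun s => Real.cos (L s))
      (-Real.sin (L t) * Real.cos (ψ t)) t :=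
    (Real.hasDerivAt_cos (L t)).comp t hLt
  have htan : HasDerivAt (fun s => Real.tan (L s))
      (1 / Real.cos (L t) ^ 2 * Real.cos (ψ t)) t :=
    (Real.hasDerivAt_tan hcLt).comp t hLt
  have h1 := (hlamL' t ht).mul hsin
  have h2 := ((hlaml' t ht).mul hcos).div hcosL hcLt
  have h3 := ((hlamψ' t ht).mul htan).mul hcos
  have hF := (h1.sub h2).sub h3
  have hH := hHam t ht
  have hp : Real.sin (ψ t) ^ 2 + Real.cos (ψ t) ^ 2 = 1 := Real.sin_sq_add_cos_sq _
  have hpL : Real.sin (L t) ^ 2 + Real.cos (L t) ^ 2 = 1 := Real.sin_sq_add_cos_sq _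
  have hηne : η ≠ 0 := ne_of_gt hη
  have hkey : -lamψ t * (1 + (u t) ^ 2 / η ^ 2) - e * u t / η =
      ((-laml t * Real.sin (ψ t) * Real.sin (L t) / Real.cos (L t) ^ 2
          - lamψ t * Real.sin (ψ t) / Real.cos (L t) ^ 2) * Real.sin (ψ t)
        + lamL t * (Real.cos (ψ t) * (Real.tan (L t) * Real.sin (ψ t) + u t / η))
      - ((0 * Real.cos (ψ t)
            + laml t * (-Real.sin (ψ t) * (Real.tan (L t) * Real.sin (ψ t) + u t / η)))
              * Real.cos (L t)
          - laml t * Real.cos (ψ t) * (-Real.sin (L t) * Real.cos (ψ t)))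
            / Real.cos (L t) ^ 2
      - (((lamL t * Real.sin (ψ t) - laml t * Real.cos (ψ t) / Real.cos (L t)
            - lamψ t * Real.tan (L t) * Real.cos (ψ t)) * Real.tan (L t)
          + lamψ t * (1 / Real.cos (L t) ^ 2 * Real.cos (ψ t))) * Real.cos (ψ t)
        + lamψ t * Real.tan (L t)
            * (-Real.sin (ψ t) * (Real.tan (L t) * Real.sin (ψ t) + u t / η)))) := by
    have hcL2 : Real.cos (L t) ^ 2 ≠ 0 := pow_ne_zero _ hcLt
    rw [Real.tan_eq_sin_div_cos] at hH ⊢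
    have hiCL : Real.cos (L t) * (Real.cos (L t))⁻¹ = 1 := mul_inv_cancel₀ hcLt
    linear_combination (-(u t / η)) * hH
      + (lamψ t * (1 - Real.sin (L t) ^ 2) / Real.cos (L t) ^ 2) * hp
      + (-(lamψ t) / Real.cos (L t) ^ 2) * hpL
      + (lamψ t * (Real.cos (L t) * (Real.cos (L t))⁻¹ + 1)
          - u t * η⁻¹ * (Real.cos (L t))⁻¹ * laml t * Real.sin (ψ t)
          - Real.sin (L t) * ((Real.cos (L t))⁻¹) ^ 2 * laml t * Real.sin (ψ t) ^ 2) * hiCL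
  rw [hkey]
  exact hF
end
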